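/- arXiv:2002.04778 — 2 statements merged into one kernel-verified Lean document; each statement's English description precedes it below -/
import Mathlib

section
/- Let H be a finite simple graph, k a positive integer, and c : V(H) → [k] a coloring such that no two vertices of the same color are adjacent. Let (𝒮, U) be the SET-COVER instance constructed from (H, k, c) as described, and let k' = k + C(k,2). Then every set cover of 𝒮 of cardinality at most k' is an exact cover (its sets are pairwise disjoint). -/
/-! Every element of the key set `K = [k] ∪ {{i,j} : i ≠ j}` lies in some set of a cover, and
each set of `𝒮` contains at most one key element. As `|K| = k + C(k,2)`, a cover of that size
matches its sets bijectively with the key elements, so no key element is covered twice. Two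
sets sharing an element `(x,y)` would then share a key element as well: two edge sets share
their color pair, and a vertex set `S_x` meeting an edge set `S_{ab}` with, say, `c x = c a`
is impossible because the element `(a,b)` forces `S_a` into the cover, which then shares the
color `c a` with `S_x`. -/

/-- The element type of the SET-COVER universe constructed from a multicolored-clique
instance: an element is a color `i ∈ [k]`, an unordered pair of colors `{i,j}`,
or an ordered pair of vertices `(u,v)`. -/
abbrev MCElt (k : ℕ) (V : Type*) := Fin k ⊕ (Sym2 (Fin k) ⊕ V × V)

/-- The universe `U = [k] ∪ {{i,j} : i ≠ j} ∪ {(u,v) : uv ∈ E(H)}` of the constructed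
SET-COVER instance (both ordered pairs are included for each edge of `H`). -/
def mcUniv {V : Type*} (H : SimpleGraph V) (k : ℕ) : Set (MCElt k V) :=
  {w | (∃ i : Fin k, w = Sum.inl i) ∨
       (∃ s : Sym2 (Fin k), ¬ s.IsDiag ∧ w = Sum.inr (Sum.inl s)) ∨
       (∃ u v : V, H.Adj u v ∧ w = Sum.inr (Sum.inr (u, v)))}

/-- The set `S_u = {c(u)} ∪ {(u,v) : v ∈ N(u)}` constructed from a vertex `u`. -/
def mcVtxSet {V : Type*} (H : SimpleGraph V) {k : ℕ} (c : V → Fin k) (u : V) :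
    Set (MCElt k V) :=
  {w | w = Sum.inl (c u) ∨ ∃ v, H.Adj u v ∧ w = Sum.inr (Sum.inr (u, v))}

/-- The set `S_{uv} = {{c(u),c(v)}} ∪ {(x,y) ∈ U_{c(u)c(v)} : x ∉ {u,v}}` constructed
from an edge `uv` of `H` (where `U_{ij}` is the set of ordered pairs of adjacent vertices
with color pair `{i,j}`). -/
def mcEdgeSet {V : Type*} (H : SimpleGraph V) {k : ℕ} (c : V → Fin k) (u v : V) :
    Set (MCElt k V) :=
  {w | w = Sum.inr (Sum.inl s(c u, c v)) ∨
       ∃ x y, H.Adj x y ∧ s(c x, c y) = s(c u, c v) ∧ x ≠ u ∧ x ≠ v ∧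
         w = Sum.inr (Sum.inr (x, y))}

/-- The collection `𝒮` of the constructed SET-COVER instance: one set `S_u` for each
vertex `u` of `H` and one set `S_{uv}` for each edge `uv` of `H`. -/
def mcColl {V : Type*} (H : SimpleGraph V) {k : ℕ} (c : V → Fin k) :
    Set (Set (MCElt k V)) :=
  {T | ∃ u, T = mcVtxSet H c u} ∪ {T | ∃ u v, H.Adj u v ∧ T = mcEdgeSet H c u v}

theorem eq_of_mem_of_mem_of_ncard_le {α : Type*} {𝒮 : Set (Set α)} {K : Set α}
    (h𝒮 : 𝒮.Finite) (hcover : K ⊆ ⋃₀ 𝒮) (hK : ∀ A ∈ 𝒮, (A ∩ K).Subsingleton)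
    (hcard : 𝒮.ncard ≤ K.ncard) {x : α} (hx : x ∈ K) {A B : Set α} (hA : A ∈ 𝒮)
    (hB : B ∈ 𝒮) (hxA : x ∈ A) (hxB : x ∈ B) : A = B := by
  choose! f hf using fun y (hy : y ∈ K) => Set.mem_sUnion.1 (hcover hy)
  have hinj : Set.InjOn f K := fun y hy z hz hyz =>
    hK _ (hf y hy).1 ⟨(hf y hy).2, hy⟩ ⟨hyz ▸ (hf z hz).2, hz⟩
  have himage : f '' K = 𝒮 := by
    refine Set.eq_of_subset_of_ncard_le (Set.image_subset_iff.2 fun y hy => (hf y hy).1) ?_ h𝒮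
    rwa [hinj.ncard_image]
  have hchosen : ∀ T ∈ 𝒮, x ∈ T → T = f x := by
    intro T hT hxT
    obtain ⟨y, hy, rfl⟩ := himage.symm ▸ hT
    rw [hK _ hT ⟨(hf y hy).2, hy⟩ ⟨hxT, hx⟩]
  exact (hchosen A hA hxA).trans (hchosen B hB hxB).symm

section MulticoloredClique

variable {V : Type*} {H : SimpleGraph V} {k : ℕ} {c : V → Fin k}

@[simp]
theorem inl_mem_mcVtxSet {u : V} {i : Fin k} :
    (Sum.inl i : MCElt k V) ∈ mcVtxSet H c u ↔ i = c u := by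
  simp [mcVtxSet]

@[simp]
theorem inr_inl_notMem_mcVtxSet {u : V} {s : Sym2 (Fin k)} :
    (Sum.inr (Sum.inl s) : MCElt k V) ∉ mcVtxSet H c u := by
  simp [mcVtxSet]

@[simp]
theorem inr_inr_mem_mcVtxSet {u x y : V} :
    (Sum.inr (Sum.inr (x, y)) : MCElt k V) ∈ mcVtxSet H c u ↔ H.Adj u y ∧ x = u := by
  simp [mcVtxSet]

@[simp]
theorem inl_notMem_mcEdgeSet {a b : V} {i : Fin k} :
    (Sum.inl i : MCElt k V) ∉ mcEdgeSet H c a b := by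
  simp [mcEdgeSet]

@[simp]
theorem inr_inl_mem_mcEdgeSet {a b : V} {s : Sym2 (Fin k)} :
    (Sum.inr (Sum.inl s) : MCElt k V) ∈ mcEdgeSet H c a b ↔ s = s(c a, c b) := by
  simp [mcEdgeSet]

@[simp]
theorem inr_inr_mem_mcEdgeSet {a b x y : V} :
    (Sum.inr (Sum.inr (x, y)) : MCElt k V) ∈ mcEdgeSet H c a b ↔
      H.Adj x y ∧ s(c x, c y) = s(c a, c b) ∧ x ≠ a ∧ x ≠ b := by
  simp [mcEdgeSet]

theorem mcEdgeSet_comm (a b : V) : mcEdgeSet H c a b = mcEdgeSet H c b a := by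
  ext w
  simp only [mcEdgeSet, Set.mem_ofPred_eq, Sym2.eq_swap (a := c a)]
  tauto

/-- The key set `K = [k] ∪ {{i,j} : i ≠ j}`. -/
def mcKey (k : ℕ) (V : Type*) : Set (MCElt k V) :=
  Set.range (Sum.elim Sum.inl (Sum.inr ∘ Sum.inl ∘ Subtype.val) :
    Fin k ⊕ {s : Sym2 (Fin k) // ¬ s.IsDiag} → MCElt k V)

theorem inl_mem_mcKey (i : Fin k) : (Sum.inl i : MCElt k V) ∈ mcKey k V :=
  ⟨Sum.inl i, rfl⟩

theorem inr_inl_mem_mcKey {s : Sym2 (Fin k)} (hs : ¬ s.IsDiag) :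
    (Sum.inr (Sum.inl s) : MCElt k V) ∈ mcKey k V :=
  ⟨Sum.inr ⟨s, hs⟩, rfl⟩

theorem mcKey_subset_mcUniv : mcKey k V ⊆ mcUniv H k := by
  rintro _ ⟨(i | ⟨s, hs⟩), rfl⟩
  · exact Or.inl ⟨i, rfl⟩
  · exact Or.inr (Or.inl ⟨s, hs, rfl⟩)

theorem ncard_mcKey : (mcKey k V).ncard = k + k.choose 2 := by
  rw [mcKey, Set.ncard_range_of_injective, Nat.card_sum, Nat.card_eq_fintype_card,
    Nat.card_eq_fintype_card, Sym2.card_subtype_not_diag, Fintype.card_fin]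
  rintro (i | ⟨s, _⟩) (j | ⟨t, _⟩) h <;> simp_all

theorem inter_mcKey_subsingleton {T : Set (MCElt k V)} (hT : T ∈ mcColl H c) :
    (T ∩ mcKey k V).Subsingleton := by
  rcases hT with ⟨u, rfl⟩ | ⟨a, b, -, rfl⟩
  · refine (Set.subsingleton_singleton (a := (Sum.inl (c u) : MCElt k V))).anti ?_
    rintro _ ⟨h, (i | ⟨s, _⟩), rfl⟩ <;> simp_all
  · refine (Set.subsingleton_singleton (a := (Sum.inr (Sum.inl s(c a, c b)) : MCElt k V))).anti ?_
    rintro _ ⟨h, (i | ⟨s, _⟩), rfl⟩ <;> simp_all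

theorem inr_inl_mem_mcKey_of_adj (hproper : ∀ u w : V, H.Adj u w → c u ≠ c w) {a b : V}
    (hab : H.Adj a b) : (Sum.inr (Sum.inl s(c a, c b)) : MCElt k V) ∈ mcKey k V :=
  inr_inl_mem_mcKey (Sym2.mk_isDiag_iff.not.2 (hproper a b hab))

theorem mcVtxSet_mem_of_mcEdgeSet_mem {𝒮 : Set (Set (MCElt k V))}
    (hproper : ∀ u w : V, H.Adj u w → c u ≠ c w) (hsub : 𝒮 ⊆ mcColl H c)
    (hcover : mcUniv H k ⊆ ⋃₀ 𝒮)
    (huniq : ∀ x ∈ mcKey k V, ∀ A ∈ 𝒮, ∀ B ∈ 𝒮, x ∈ A → x ∈ B → A = B)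
    {a b : V} (hab : H.Adj a b) (hS : mcEdgeSet H c a b ∈ 𝒮) : mcVtxSet H c a ∈ 𝒮 := by
  obtain ⟨T, hT, habT⟩ := hcover (Or.inr (Or.inr ⟨a, b, hab, rfl⟩) :
    (Sum.inr (Sum.inr (a, b)) : MCElt k V) ∈ mcUniv H k)
  rcases hsub hT with ⟨v, rfl⟩ | ⟨x, y, -, rfl⟩
  · obtain ⟨-, rfl⟩ := inr_inr_mem_mcVtxSet.1 habT
    exact hT
  · obtain ⟨-, hlabel, -, -⟩ := inr_inr_mem_mcEdgeSet.1 habT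
    have hxy : mcEdgeSet H c x y = mcEdgeSet H c a b :=
      huniq _ (inr_inl_mem_mcKey_of_adj hproper hab) _ hT _ hS (by simp [hlabel]) (by simp)
    rw [hxy] at habT
    simp at habT

theorem disjoint_mcVtxSet_mcEdgeSet {𝒮 : Set (Set (MCElt k V))}
    (hproper : ∀ u w : V, H.Adj u w → c u ≠ c w) (hsub : 𝒮 ⊆ mcColl H c)
    (hcover : mcUniv H k ⊆ ⋃₀ 𝒮)
    (huniq : ∀ x ∈ mcKey k V, ∀ A ∈ 𝒮, ∀ B ∈ 𝒮, x ∈ A → x ∈ B → A = B)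
    {u a b : V} (hab : H.Adj a b) (hu : mcVtxSet H c u ∈ 𝒮) (hS : mcEdgeSet H c a b ∈ 𝒮) :
    Disjoint (mcVtxSet H c u) (mcEdgeSet H c a b) := by
  rw [Set.disjoint_left]
  rintro (i | s | ⟨x, y⟩) hwu hwS
  · simp at hwS
  · simp at hwu
  obtain ⟨-, rfl⟩ := inr_inr_mem_mcVtxSet.1 hwu
  obtain ⟨-, hlabel, hxa, hxb⟩ := inr_inr_mem_mcEdgeSet.1 hwS
  have heq_of_color : ∀ v, c x = c v → mcVtxSet H c v ∈ 𝒮 → x = v := fun v hcv hv => by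
    have hxv : mcVtxSet H c x = mcVtxSet H c v :=
      huniq _ (inl_mem_mcKey (c x)) _ hu _ hv (by simp) (by simp [hcv])
    exact (inr_inr_mem_mcVtxSet.1 (hxv ▸ hwu)).2
  have hcolor : c x = c a ∨ c x = c b := Sym2.mem_iff.1 (hlabel ▸ Sym2.mem_mk_left _ _)
  rcases hcolor with hca | hcb
  · exact hxa (heq_of_color a hca (mcVtxSet_mem_of_mcEdgeSet_mem hproper hsub hcover huniq hab hS))
  · exact hxb (heq_of_color b hcb (mcVtxSet_mem_of_mcEdgeSet_mem hproper hsub hcover huniq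
      hab.symm (mcEdgeSet_comm (H := H) a b ▸ hS)))

theorem eq_of_mem_of_mem_of_mcKey_unique {𝒮 : Set (Set (MCElt k V))}
    (hproper : ∀ u w : V, H.Adj u w → c u ≠ c w) (hsub : 𝒮 ⊆ mcColl H c)
    (hcover : mcUniv H k ⊆ ⋃₀ 𝒮)
    (huniq : ∀ x ∈ mcKey k V, ∀ A ∈ 𝒮, ∀ B ∈ 𝒮, x ∈ A → x ∈ B → A = B)
    {A B : Set (MCElt k V)} {w : MCElt k V} (hA : A ∈ 𝒮) (hB : B ∈ 𝒮) (hwA : w ∈ A)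
    (hwB : w ∈ B) : A = B := by
  rcases w with i | s | ⟨x, y⟩
  · exact huniq _ (inl_mem_mcKey i) _ hA _ hB hwA hwB
  · have hs : (Sum.inr (Sum.inl s) : MCElt k V) ∈ mcKey k V := by
      rcases hsub hA with ⟨u, rfl⟩ | ⟨a, b, hab, rfl⟩
      · simp at hwA
      · exact inr_inl_mem_mcEdgeSet.1 hwA ▸ inr_inl_mem_mcKey_of_adj hproper hab
    exact huniq _ hs _ hA _ hB hwA hwB
  rcases hsub hA with ⟨u, rfl⟩ | ⟨a, b, hab, rfl⟩ <;>
    rcases hsub hB with ⟨u', rfl⟩ | ⟨a', b', hab', rfl⟩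
  · rw [(inr_inr_mem_mcVtxSet.1 hwA).2.symm.trans (inr_inr_mem_mcVtxSet.1 hwB).2]
  · exact (Set.disjoint_left.1
      (disjoint_mcVtxSet_mcEdgeSet hproper hsub hcover huniq hab' hA hB) hwA hwB).elim
  · exact (Set.disjoint_left.1
      (disjoint_mcVtxSet_mcEdgeSet hproper hsub hcover huniq hab hB hA) hwB hwA).elim
  · obtain ⟨-, hlabel, -, -⟩ := inr_inr_mem_mcEdgeSet.1 hwA
    obtain ⟨-, hlabel', -, -⟩ := inr_inr_mem_mcEdgeSet.1 hwB
    exact huniq _ (inr_inl_mem_mcKey_of_adj hproper hab) _ hA _ hB (by simp)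
      (by simp [← hlabel, hlabel'])

end MulticoloredClique

theorem small_cover_is_exact_general
    {V : Type*} [Fintype V]
    (H : SimpleGraph V) (k : ℕ)
    (c : V → Fin k)
    (hproper : ∀ u w : V, H.Adj u w → c u ≠ c w)
    (𝒮star : Set (Set (MCElt k V)))
    (hsub : 𝒮star ⊆ mcColl H c)
    (hcover : mcUniv H k ⊆ ⋃₀ 𝒮star)
    (hcard : 𝒮star.ncard ≤ k + k.choose 2) :
    ∀ A ∈ 𝒮star, ∀ B ∈ 𝒮star, A ≠ B → Disjoint A B := by
  have huniq : ∀ x ∈ mcKey k V, ∀ A ∈ 𝒮star, ∀ B ∈ 𝒮star, x ∈ A → x ∈ B → A = B :=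
    fun _ hx _ hA _ hB => eq_of_mem_of_mem_of_ncard_le 𝒮star.toFinite
      (mcKey_subset_mcUniv.trans hcover) (fun _ hT => inter_mcKey_subsingleton (hsub hT))
      (hcard.trans ncard_mcKey.ge) hx hA hB
  intro A hA B hB hne
  exact Set.disjoint_left.2 fun _ hwA hwB =>
    hne (eq_of_mem_of_mem_of_mcKey_unique hproper hsub hcover huniq hA hB hwA hwB)

/-- exactness part of Lemma 6 of the paper: let `H` be a finite
simple graph, `k > 0`, and `c` a proper coloring of `H` with colors `Fin k`.
Then every set cover of the constructed SET-COVER instance of cardinality at most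
`k' = k + C(k,2)` is an exact cover, i.e. its sets are pairwise disjoint. -/
theorem small_cover_is_exact
    {V : Type*} [Fintype V] [DecidableEq V]
    (H : SimpleGraph V) (k : ℕ) (hk : 0 < k)
    (c : V → Fin k)
    (hproper : ∀ u w : V, H.Adj u w → c u ≠ c w)
    (𝒮star : Set (Set (MCElt k V)))
    (hsub : 𝒮star ⊆ mcColl H c)
    (hcover : mcUniv H k ⊆ ⋃₀ 𝒮star)
    (hcard : 𝒮star.ncard ≤ k + k.choose 2) :
    ∀ A ∈ 𝒮star, ∀ B ∈ 𝒮star, A ≠ B → Disjoint A B :=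
  small_cover_is_exact_general H k c hproper 𝒮star hsub hcover hcard
end

section
/- Let c_1, c_2 : Σ → ℕ be two CNPs over a finite alphabet Σ and let n* = Σ_{x ∈ Σ} min(c_1(x), c_2(x)). Suppose there exist distinct characters x, y ∈ Σ with min(c_1(x), c_2(x)) ≥ 1, min(c_1(y), c_2(y)) ≥ 1, c_1(x) > c_2(x), and c_2(y) > c_1(y). Then there exist strings S_1, S_2 over Σ with cnp(S_1) = c_1, cnp(S_2) = c_2, and a(S_1, S_2) = n*. -/
/-- The copy-number profile of a string: the number of occurrences of each character. -/
def cnp {α : Type*} [DecidableEq α] (S : List α) : α → ℕ := fun x => S.count x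

/-- The adjacency multiset of a string: the multiset of unordered pairs
`{S[i], S[i+1]}` over all consecutive positions of `S`. -/
def adjMultiset {α : Type*} : List α → Multiset (Sym2 α)
  | [] => 0
  | [_] => 0
  | a :: b :: rest => s(a, b) ::ₘ adjMultiset (b :: rest)

/-- The number of common adjacencies `a(S₁, S₂)` between two strings: the cardinality of
the multiset intersection of their adjacency multisets. -/
def numAdj {α : Type*} [DecidableEq α] (S₁ S₂ : List α) : ℕ :=
  Multiset.card (adjMultiset S₁ ∩ adjMultiset S₂)

/-!
Let `v = min c₁ c₂` and take a string `T` with profile `v` that starts with `y` and ends with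
`x`. Put the surplus `c₁ - v` in front of `T`, arranged to end with `x`, and the surplus
`c₂ - v` after `T`, arranged to start with `y`. Both strings then contain the `n* - 1`
adjacencies of `T` and the junction `{x, y}`, and they share nothing else: the surplus of `c₁`
uses only letters with `c₂ < c₁`, that of `c₂` only letters with `c₁ < c₂`.
-/

section

variable {α : Type*}

lemma card_adjMultiset_cons (a : α) (l : List α) :
    Multiset.card (adjMultiset (a :: l)) = l.length := by
  induction l generalizing a with
  | nil => rfl
  | cons b l ih => simp [adjMultiset, ih b]

lemma adjMultiset_append_cons_cons (l : List α) (a b : α) (r : List α) :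
    adjMultiset (l ++ a :: b :: r) =
      adjMultiset (l ++ [a]) + s(a, b) ::ₘ adjMultiset (b :: r) := by
  induction l with
  | nil => simp [adjMultiset]
  | cons c l ih =>
    cases l with
    | nil => simp [adjMultiset, Multiset.cons_swap]
    | cons d l =>
      simp only [List.cons_append] at ih ⊢
      rw [adjMultiset, ih, adjMultiset, Multiset.cons_add]

lemma mem_of_mem_adjMultiset {l : List α} {a b : α} (h : s(a, b) ∈ adjMultiset l) :
    a ∈ l ∧ b ∈ l := by
  induction l using adjMultiset.induct with
  | case1 | case2 => simp [adjMultiset] at h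
  | case3 c d l ih =>
    rcases Multiset.mem_cons.mp h with h | h
    · rcases Sym2.eq_iff.mp h with ⟨rfl, rfl⟩ | ⟨rfl, rfl⟩ <;> simp
    · exact (ih h).imp (List.mem_cons_of_mem c) (List.mem_cons_of_mem c)

lemma disjoint_adjMultiset [DecidableEq α] {l₁ l₂ : List α} (h : l₁.Disjoint l₂) :
    Disjoint (adjMultiset l₁) (adjMultiset l₂) := by
  rw [Multiset.disjoint_left]
  intro p h₁ h₂
  induction p using Sym2.ind with
  | _ a b => exact h (mem_of_mem_adjMultiset h₁).1 (mem_of_mem_adjMultiset h₂).1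

theorem numAdj_append_cons_append_cons [DecidableEq α] {P Q : List α} {a b : α}
    (h : (P ++ [a]).Disjoint (b :: Q)) (M : List α) :
    numAdj (P ++ a :: (b :: (M ++ [a]))) ((b :: (M ++ [a])) ++ b :: Q) =
      (b :: (M ++ [a])).length := by
  have h₁ : adjMultiset (P ++ a :: (b :: (M ++ [a]))) =
      adjMultiset (P ++ [a]) + s(a, b) ::ₘ adjMultiset (b :: (M ++ [a])) :=
    adjMultiset_append_cons_cons P a b (M ++ [a])
  have h₂ : adjMultiset ((b :: (M ++ [a])) ++ b :: Q) =
      adjMultiset (b :: Q) + s(a, b) ::ₘ adjMultiset (b :: (M ++ [a])) := by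
    rw [← List.cons_append, List.append_assoc, List.singleton_append,
      adjMultiset_append_cons_cons, add_comm, Multiset.cons_add, Multiset.add_cons]
  rw [numAdj, h₁, h₂, ← Multiset.inter_add_distrib,
    Multiset.inter_eq_zero_iff_disjoint.mpr (disjoint_adjMultiset h), zero_add,
    Multiset.card_cons, card_adjMultiset_cons]
  rfl

section
variable [DecidableEq α]

@[simp] lemma cnp_nil : cnp ([] : List α) = 0 := rfl

@[simp] lemma cnp_cons (a : α) (l : List α) : cnp (a :: l) = Pi.single a 1 + cnp l := by
  funext z
  simp only [cnp, List.count_cons, Pi.add_apply, Pi.single_apply, beq_iff_eq]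
  split_ifs <;> subst_vars <;> simp_all [add_comm]

@[simp] lemma cnp_append (l₁ l₂ : List α) : cnp (l₁ ++ l₂) = cnp l₁ + cnp l₂ := by
  funext z
  simp [cnp]

end

section
variable [Fintype α] [DecidableEq α]

noncomputable def ofCnp (c : α → ℕ) : List α :=
  Finset.univ.toList.flatMap fun z => List.replicate (c z) z

@[simp]
lemma cnp_ofCnp (c : α → ℕ) : cnp (ofCnp c) = c := by
  funext z
  simp [cnp, ofCnp, List.count_flatMap, List.count_replicate, Finset.sum_map_toList]

lemma mem_ofCnp {c : α → ℕ} {z : α} : z ∈ ofCnp c ↔ 0 < c z := by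
  rw [← List.count_pos_iff, ← cnp, cnp_ofCnp]

lemma sum_cnp (l : List α) : ∑ z, cnp l z = l.length := by
  simp [cnp, ← Multiset.coe_count]

end

end

theorem exists_strings_numAdj_eq_nstar_general
    {α : Type*} [Fintype α] [DecidableEq α] (c₁ c₂ : α → ℕ)
    (x y : α)
    (hx1 : 1 ≤ min (c₁ x) (c₂ x)) (hy1 : 1 ≤ min (c₁ y) (c₂ y))
    (hx : c₂ x < c₁ x) (hy : c₁ y < c₂ y) :
    ∃ S₁ S₂ : List α, cnp S₁ = c₁ ∧ cnp S₂ = c₂ ∧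
      numAdj S₁ S₂ = ∑ z : α, min (c₁ z) (c₂ z) := by
  set v : α → ℕ := fun z => min (c₁ z) (c₂ z)
  set P := ofCnp (c₁ - c₂ - Pi.single x 1)
  set Q := ofCnp (c₂ - c₁ - Pi.single y 1)
  set T := y :: (ofCnp (v - Pi.single x 1 - Pi.single y 1) ++ [x])
  have hT : cnp T = v := by
    funext z
    simp only [T, cnp_cons, cnp_append, cnp_ofCnp, cnp_nil, Pi.add_apply, Pi.sub_apply,
      Pi.single_apply, Pi.zero_apply, v]
    split_ifs <;> subst_vars <;> omega
  refine ⟨P ++ x :: T, T ++ y :: Q, ?_, ?_, ?_⟩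
  · funext z
    simp only [P, cnp_cons, cnp_append, cnp_ofCnp, hT, Pi.add_apply, Pi.sub_apply,
      Pi.single_apply, v]
    split_ifs <;> subst_vars <;> omega
  · funext z
    simp only [Q, cnp_cons, cnp_append, cnp_ofCnp, hT, Pi.add_apply, Pi.sub_apply,
      Pi.single_apply, v]
    split_ifs <;> subst_vars <;> omega
  · have hPQ : (P ++ [x]).Disjoint (y :: Q) := by
      intro z h₁ h₂
      simp only [P, Q, List.mem_append, List.mem_cons, List.not_mem_nil,
        or_false, mem_ofCnp, Pi.sub_apply] at h₁ h₂
      rcases h₁ with h₁ | rfl <;> rcases h₂ with rfl | h₂ <;> omega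
    rw [numAdj_append_cons_append_cons hPQ, ← sum_cnp, hT]

/-- achievability of `n*` in Theorem 4 of the paper: for CNPs
`c₁, c₂` over a finite alphabet `α`, if there are distinct characters `x, y` with
`min(c₁(x), c₂(x)) ≥ 1`, `min(c₁(y), c₂(y)) ≥ 1`, `c₁(x) > c₂(x)` and `c₂(y) > c₁(y)`,
then there exist strings `S₁, S₂` with `cnp(S₁) = c₁`, `cnp(S₂) = c₂`, and exactly
`n* = Σ_z min(c₁(z), c₂(z))` common adjacencies. -/
theorem exists_strings_numAdj_eq_nstar
    {α : Type*} [Fintype α] [DecidableEq α] (c₁ c₂ : α → ℕ)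
    (x y : α) (hxy : x ≠ y)
    (hx1 : 1 ≤ min (c₁ x) (c₂ x)) (hy1 : 1 ≤ min (c₁ y) (c₂ y))
    (hx : c₂ x < c₁ x) (hy : c₁ y < c₂ y) :
    ∃ S₁ S₂ : List α, cnp S₁ = c₁ ∧ cnp S₂ = c₂ ∧
      numAdj S₁ S₂ = ∑ z : α, min (c₁ z) (c₂ z) :=
  exists_strings_numAdj_eq_nstar_general c₁ c₂ x y hx1 hy1 hx hy
end
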